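/- arXiv:2210.03810 — 3 statements merged into one kernel-verified Lean document; each statement's English description precedes it below -/
import Mathlib

section
/- If a differentiable function f: ℝ^d → ℝ satisfies the Polyak-Łojasiewicz condition f(x) - f* ≤ (1/(2μ))‖∇f(x)‖² for all x (where f* is the infimum of f and μ > 0), then f satisfies the quadratic growth condition: for every x, μ/2 · ‖x - x*‖² ≤ f(x) - f*, where x* is the point of the solution set nearest to x (assuming the set of minimizers is nonempty and closed). -/
/-!
Put `g = √(f - fstar)`. Wherever `g > 0` the PL inequality says `‖∇g‖ ≥ √(μ/2)`. For
`σ < √(μ/2)`, an Ekeland point `y` of `g` started at `x` (`g y ≤ g z + σ‖z - y‖` for all `z`,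
and `σ‖x - y‖ ≤ g x - g y`) has slope at most `σ` at `y`, which forces `g y = 0`. So `y` is a
minimizer and `σ‖x - xstar‖ ≤ σ‖x - y‖ ≤ g x`; let `σ ↑ √(μ/2)` and square.
-/

open InnerProductSpace Set Filter Topology

/-- Weak Ekeland principle; in a proper space a minimizer of `h + σ * dist · x₀` will do. -/
theorem Continuous.exists_ekeland_point {X : Type*} [PseudoMetricSpace X] [ProperSpace X]
    {h : X → ℝ} (hc : Continuous h) (hb : BddBelow (range h)) {σ : ℝ} (hσ : 0 < σ) (x₀ : X) :
    ∃ y, σ * dist y x₀ ≤ h x₀ - h y ∧ ∀ z, h y ≤ h z + σ * dist z y := by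
  obtain ⟨b, hb⟩ := hb
  have hcoercive : Tendsto (fun z => h z + σ * dist z x₀) (cocompact X) atTop :=
    tendsto_atTop_add_left_of_le _ b (fun z => hb ⟨z, rfl⟩)
      ((tendsto_dist_right_cocompact_atTop x₀).const_mul_atTop hσ)
  have : Nonempty X := ⟨x₀⟩
  obtain ⟨y, hy⟩ := (hc.add (by fun_prop : Continuous fun z => σ * dist z x₀)).exists_forall_le
    hcoercive
  simp only [Pi.add_apply] at hy
  refine ⟨y, ?_, fun z => ?_⟩
  · linarith [(hy x₀).trans_eq (by rw [dist_self, mul_zero, add_zero])]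
  · nlinarith [hy z, dist_triangle z y x₀]

theorem IsLocalMinOn.hasDerivAt_nonneg_of_Ici {ψ : ℝ → ℝ} {ψ' a : ℝ}
    (h : IsLocalMinOn ψ (Ici a) a) (hψ : HasDerivAt ψ ψ' a) : 0 ≤ ψ' := by
  simpa using h.hasFDerivWithinAt_nonneg (y := 1) hψ.hasFDerivAt.hasFDerivWithinAt
    (mem_posTangentConeAt_of_segment_subset (by simp [segment_eq_Icc]; exact Icc_subset_Ici_self))

section NormedSpace

variable {E : Type*} [NormedAddCommGroup E] [NormedSpace ℝ E]

theorem HasFDerivAt.norm_le_of_eventually_le_add_mul_norm {g : E → ℝ} {g' : E →L[ℝ] ℝ} {y : E}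
    {σ : ℝ} (hg : HasFDerivAt g g' y) (hσ : 0 ≤ σ)
    (hy : ∀ᶠ z in 𝓝 y, g y ≤ g z + σ * ‖z - y‖) : ‖g'‖ ≤ σ := by
  have lower : ∀ v, -(σ * ‖v‖) ≤ g' v := by
    intro v
    have hline : HasDerivAt (fun t : ℝ => y + t • v) v 0 := by
      simpa using ((hasDerivAt_id (0 : ℝ)).smul_const v).const_add y
    have hψ : HasDerivAt (fun t : ℝ => g (y + t • v) + t * (σ * ‖v‖)) (g' v + σ * ‖v‖) 0 := by
      have hg0 : HasFDerivAt g g' (y + (0 : ℝ) • v) := by simpa using hg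
      exact (hg0.comp_hasDerivAt 0 hline).fun_add (hasDerivAt_mul_const (σ * ‖v‖))
    -- on the ray `t ≥ 0` the penalty `σ * ‖t • v‖` is linear in `t`
    have hmin : IsLocalMinOn (fun t : ℝ => g (y + t • v) + t * (σ * ‖v‖)) (Ici 0) 0 := by
      have hcont : Tendsto (fun t : ℝ => y + t • v) (𝓝 0) (𝓝 y) := by
        simpa using hline.continuousAt.tendsto
      filter_upwards [nhdsWithin_le_nhds (hcont.eventually hy), self_mem_nhdsWithin]
        with t ht (ht0 : 0 ≤ t)
      simpa [norm_smul, abs_of_nonneg ht0, mul_left_comm] using ht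
    linarith [hmin.hasDerivAt_nonneg_of_Ici hψ]
  refine g'.opNorm_le_bound hσ fun v => abs_le.2 ⟨lower v, ?_⟩
  simpa using lower (-v)

end NormedSpace

section InnerProductSpace

variable {E : Type*} [NormedAddCommGroup E] [InnerProductSpace ℝ E]

theorem le_of_sqrt_sub_le_add_mul_norm [CompleteSpace E] {f : E → ℝ} {fstar μ σ : ℝ} {y : E}
    (hσ : 0 ≤ σ) (hσμ : 2 * σ ^ 2 < μ) (hf : DifferentiableAt ℝ f y)
    (hPL : f y - fstar ≤ 1 / (2 * μ) * ‖gradient f y‖ ^ 2)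
    (hy : ∀ᶠ z in 𝓝 y, √(f y - fstar) ≤ √(f z - fstar) + σ * ‖z - y‖) : f y ≤ fstar := by
  by_contra! hgap
  have hr : 0 < f y - fstar := sub_pos.2 hgap
  have hμ : 0 < μ := by nlinarith
  have hslope : ‖(1 / (2 * √(f y - fstar))) • fderiv ℝ f y‖ ≤ σ :=
    ((hf.hasFDerivAt.sub_const fstar).sqrt hr.ne').norm_le_of_eventually_le_add_mul_norm hσ hy
  have hgrad : ‖gradient f y‖ ≤ 2 * σ * √(f y - fstar) := by
    have hsqrt : 0 < √(f y - fstar) := Real.sqrt_pos.2 hr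
    rw [norm_smul, Real.norm_of_nonneg (by positivity), one_div, inv_mul_le_iff₀ (by positivity)]
      at hslope
    rw [gradient, LinearIsometryEquiv.norm_map]
    linarith
  have : f y - fstar ≤ 2 * σ ^ 2 / μ * (f y - fstar) := calc
    f y - fstar ≤ 1 / (2 * μ) * ‖gradient f y‖ ^ 2 := hPL
    _ ≤ 1 / (2 * μ) * (2 * σ * √(f y - fstar)) ^ 2 := by gcongr
    _ = 2 * σ ^ 2 / μ * (f y - fstar) := by
      rw [mul_pow, Real.sq_sqrt hr.le]; field_simp
  have : 2 * σ ^ 2 / μ < 1 := (div_lt_one hμ).2 hσμ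
  nlinarith

theorem exists_le_and_mul_dist_le_sqrt_sub [ProperSpace E] {f : E → ℝ} {fstar μ σ : ℝ}
    (hσ : 0 < σ) (hσμ : 2 * σ ^ 2 < μ) (hf : Differentiable ℝ f)
    (hPL : ∀ x, f x - fstar ≤ 1 / (2 * μ) * ‖gradient f x‖ ^ 2) (x : E) :
    ∃ y, f y ≤ fstar ∧ σ * dist x y ≤ √(f x - fstar) := by
  obtain ⟨y, hxy, hy⟩ := (show Continuous fun z => √(f z - fstar) from
    (hf.continuous.sub continuous_const).sqrt).exists_ekeland_point
    ⟨0, by rintro _ ⟨z, rfl⟩; exact Real.sqrt_nonneg _⟩ hσ x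
  refine ⟨y, le_of_sqrt_sub_le_add_mul_norm hσ.le hσμ (hf y) (hPL y)
    (Eventually.of_forall fun z => by simpa [dist_eq_norm] using hy z), ?_⟩
  rw [dist_comm]
  linarith [Real.sqrt_nonneg (f y - fstar)]

end InnerProductSpace

theorem pl_implies_quadratic_growth_general
    {d : ℕ} (f : EuclideanSpace ℝ (Fin d) → ℝ) (fstar μ : ℝ)
    (hμ : 0 < μ)
    (hdiff : Differentiable ℝ f)
    (hlb : ∀ x, fstar ≤ f x)
    (S : Set (EuclideanSpace ℝ (Fin d)))
    (hS : S = {x | f x = fstar})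
    (hPL : ∀ x, f x - fstar ≤ 1 / (2 * μ) * ‖gradient f x‖ ^ 2) :
    ∀ x xstar, xstar ∈ S → (∀ z ∈ S, ‖x - xstar‖ ≤ ‖x - z‖) →
      μ / 2 * ‖x - xstar‖ ^ 2 ≤ f x - fstar := by
  intro x xstar _ hnear
  have hgrowth : ∀ c ∈ Ioo 0 (μ / 2), c * ‖x - xstar‖ ^ 2 ≤ f x - fstar := by
    rintro c ⟨hc, hcμ⟩
    obtain ⟨y, hy, hxy⟩ := exists_le_and_mul_dist_le_sqrt_sub (Real.sqrt_pos.2 hc)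
      (by rw [Real.sq_sqrt hc.le]; linarith) hdiff hPL x
    have hyS : y ∈ S := hS ▸ le_antisymm hy (hlb y)
    calc c * ‖x - xstar‖ ^ 2 = (√c * ‖x - xstar‖) ^ 2 := by rw [mul_pow, Real.sq_sqrt hc.le]
      _ ≤ √(f x - fstar) ^ 2 := by
        gcongr
        exact (mul_le_mul_of_nonneg_left (hnear y hyS) (Real.sqrt_nonneg c)).trans
          (dist_eq_norm x y ▸ hxy)
      _ = f x - fstar := Real.sq_sqrt (sub_nonneg.2 (hlb x))
  exact le_of_tendsto ((continuous_mul_const _).tendsto _ |>.mono_left nhdsWithin_le_nhds)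
    (eventually_of_mem (Ioo_mem_nhdsLT (half_pos hμ)) hgrowth)

/-- PL-condition implies quadratic growth: if `f` is differentiable, its infimum `fstar`
is attained on a nonempty closed solution set `S`, and the PL-condition holds with constant
`μ > 0`, then for every `x` and every nearest solution `xstar`,
`μ/2 * ‖x - xstar‖² ≤ f x - fstar`. -/
theorem pl_implies_quadratic_growth
    {d : ℕ} (f : EuclideanSpace ℝ (Fin d) → ℝ) (fstar μ : ℝ)
    (hμ : 0 < μ)
    (hdiff : Differentiable ℝ f)
    (hlb : ∀ x, fstar ≤ f x)
    (S : Set (EuclideanSpace ℝ (Fin d)))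
    (hS : S = {x | f x = fstar})
    (hSne : S.Nonempty) (hScl : IsClosed S)
    (hPL : ∀ x, f x - fstar ≤ 1 / (2 * μ) * ‖gradient f x‖ ^ 2) :
    ∀ x xstar, xstar ∈ S → (∀ z ∈ S, ‖x - xstar‖ ≤ ‖x - z‖) →
      μ / 2 * ‖x - xstar‖ ^ 2 ≤ f x - fstar :=
  pl_implies_quadratic_growth_general f fstar μ hμ hdiff hlb S hS hPL
end

section
/- Let f: ℝ^d → ℝ be L-smooth and satisfy the PL-condition with constant μ > 0 and minimum value f*. Consider the inexact gradient descent iteration x_{k+1} = x_k − γ g_k with γ = 1/L, where the gradient errors satisfy ‖g_k − ∇f(x_k)‖ ≤ Δ for all k. Then f(x_k) − f* ≤ (1 − μ/L)^k (f(x_0) − f*) + Δ²/(2μ). -/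
/-!
Smoothness gives the descent lemma `f (x + v) ≤ f x + ⟪∇f x, v⟫ + L/2 ‖v‖²`; for the step
`v = -(1/L) w` its right-hand side is exactly `f x - (‖∇f x‖² - ‖w - ∇f x‖²) / (2L)`.
The PL-condition turns `‖∇f x‖²` into `2μ (f x - f*)`, so the gap contracts by `1 - μ/L` up to
an additive `Δ²/(2L)`, and unrolling this recursion gives the claim. When `L < μ` the two
conditions force `∇f = 0` and `f = f*`.
-/

open InnerProductSpace

theorem le_pow_mul_add_of_le_mul_add {a : ℕ → ℝ} {ρ c : ℝ} (hρ : 0 ≤ ρ) (hc : 0 ≤ c)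
    (h : ∀ k, a (k + 1) ≤ ρ * a k + (1 - ρ) * c) (k : ℕ) : a k ≤ ρ ^ k * a 0 + c := by
  induction k with
  | zero => simpa using hc
  | succ k ih =>
    calc a (k + 1) ≤ ρ * a k + (1 - ρ) * c := h k
      _ ≤ ρ * (ρ ^ k * a 0 + c) + (1 - ρ) * c := by gcongr
      _ = ρ ^ (k + 1) * a 0 + c := by ring

section LipschitzGradient

variable {E : Type*} [NormedAddCommGroup E] [InnerProductSpace ℝ E] [CompleteSpace E]
  {f : E → ℝ} {L : ℝ}

theorem le_add_inner_add_sq_norm_of_lipschitz_gradient (hdiff : Differentiable ℝ f)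
    (hsmooth : ∀ x y, ‖gradient f x - gradient f y‖ ≤ L * ‖x - y‖) (x v : E) :
    f (x + v) ≤ f x + ⟪gradient f x, v⟫_ℝ + L / 2 * ‖v‖ ^ 2 := by
  have hline (t : ℝ) :
      HasDerivAt (fun t : ℝ => f (x + t • v)) ⟪gradient f (x + t • v), v⟫_ℝ t := by
    have := ((hdiff _).hasGradientAt.hasFDerivAt).comp_hasDerivAt t
      (((hasDerivAt_id t).smul_const v).const_add x)
    simpa only [Function.comp_def, id, toDual_apply_apply, one_smul] using this
  have hquad (t : ℝ) :
      HasDerivAt (fun t : ℝ => f x + t * ⟪gradient f x, v⟫_ℝ + L / 2 * ‖v‖ ^ 2 * t ^ 2)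
      (⟪gradient f x, v⟫_ℝ + L * ‖v‖ ^ 2 * t) t := by
    refine HasDerivAt.congr_deriv (HasDerivAt.add
      (((hasDerivAt_id' t).mul_const _).const_add (f x))
      ((hasDerivAt_pow 2 t).const_mul (L / 2 * ‖v‖ ^ 2))) ?_
    push_cast; ring
  have hslope (t : ℝ) (ht : 0 ≤ t) :
      ⟪gradient f (x + t • v), v⟫_ℝ ≤ ⟪gradient f x, v⟫_ℝ + L * ‖v‖ ^ 2 * t :=
    calc ⟪gradient f (x + t • v), v⟫_ℝ
        = ⟪gradient f x, v⟫_ℝ + ⟪gradient f (x + t • v) - gradient f x, v⟫_ℝ := by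
          rw [inner_sub_left]; ring
      _ ≤ ⟪gradient f x, v⟫_ℝ + ‖gradient f (x + t • v) - gradient f x‖ * ‖v‖ := by
          gcongr; exact real_inner_le_norm _ _
      _ ≤ ⟪gradient f x, v⟫_ℝ + L * ‖t • v‖ * ‖v‖ := by
          gcongr; simpa using hsmooth (x + t • v) x
      _ = ⟪gradient f x, v⟫_ℝ + L * ‖v‖ ^ 2 * t := by
          rw [norm_smul, Real.norm_of_nonneg ht]; ring
  have := image_le_of_deriv_right_le_deriv_boundary (a := 0) (b := 1)
    (fun t _ => (hline t).continuousAt.continuousWithinAt)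
    (fun t _ => (hline t).hasDerivWithinAt) (by simp)
    (fun t _ => (hquad t).continuousAt.continuousWithinAt)
    (fun t _ => (hquad t).hasDerivWithinAt) (fun t ht => hslope t ht.1)
    (Set.right_mem_Icc.2 zero_le_one)
  simpa using this

theorem le_sub_of_gradient_step (hL : 0 < L) (hdiff : Differentiable ℝ f)
    (hsmooth : ∀ x y, ‖gradient f x - gradient f y‖ ≤ L * ‖x - y‖) (x w : E) :
    f (x - (1 / L) • w)
      ≤ f x - (‖gradient f x‖ ^ 2 - ‖w - gradient f x‖ ^ 2) / (2 * L) := by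
  have hdescent := le_add_inner_add_sq_norm_of_lipschitz_gradient hdiff hsmooth x (-((1 / L) • w))
  rw [← sub_eq_add_neg, inner_neg_right, inner_smul_right, norm_neg, norm_smul,
    Real.norm_of_nonneg (by positivity)] at hdescent
  have hsq := norm_sub_sq_real w (gradient f x)
  rw [real_inner_comm] at hsq
  convert hdescent using 1
  rw [hsq]
  field_simp
  ring

theorem sq_norm_gradient_div_le_sub (hL : 0 < L) (hdiff : Differentiable ℝ f)
    (hsmooth : ∀ x y, ‖gradient f x - gradient f y‖ ≤ L * ‖x - y‖) {fstar : ℝ}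
    (hlb : ∀ x, fstar ≤ f x) (x : E) :
    ‖gradient f x‖ ^ 2 / (2 * L) ≤ f x - fstar := by
  have hstep := le_sub_of_gradient_step hL hdiff hsmooth x (gradient f x)
  rw [sub_self, norm_zero, zero_pow two_ne_zero, sub_zero] at hstep
  linarith [hlb (x - (1 / L) • gradient f x)]

variable {μ fstar : ℝ}

theorem eq_of_lt_PL_const (hL : 0 < L) (hdiff : Differentiable ℝ f)
    (hsmooth : ∀ x y, ‖gradient f x - gradient f y‖ ≤ L * ‖x - y‖) (hlb : ∀ x, fstar ≤ f x)
    (hPL : ∀ x, f x - fstar ≤ 1 / (2 * μ) * ‖gradient f x‖ ^ 2) (hLμ : L < μ) (x : E) :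
    f x = fstar := by
  have hupper := hPL x
  have hlower := sq_norm_gradient_div_le_sub hL hdiff hsmooth hlb x
  have hgrad : ‖gradient f x‖ ^ 2 = 0 := by
    by_contra hne
    have hpos : 0 < ‖gradient f x‖ ^ 2 := lt_of_le_of_ne (sq_nonneg _) (Ne.symm hne)
    have : ‖gradient f x‖ ^ 2 / (2 * μ) < ‖gradient f x‖ ^ 2 / (2 * L) := by gcongr
    rw [one_div_mul_eq_div] at hupper
    linarith
  rw [hgrad, mul_zero] at hupper
  linarith [hlb x]

theorem sub_le_of_gradient_step_of_PL (hL : 0 < L) (hμ : 0 < μ) (hdiff : Differentiable ℝ f)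
    (hsmooth : ∀ x y, ‖gradient f x - gradient f y‖ ≤ L * ‖x - y‖)
    (hPL : ∀ x, f x - fstar ≤ 1 / (2 * μ) * ‖gradient f x‖ ^ 2) (x w : E) :
    f (x - (1 / L) • w) - fstar
      ≤ (1 - μ / L) * (f x - fstar) + ‖w - gradient f x‖ ^ 2 / (2 * L) := by
  have hstep := le_sub_of_gradient_step hL hdiff hsmooth x w
  have hgrad : 2 * μ * (f x - fstar) ≤ ‖gradient f x‖ ^ 2 := by
    have := hPL x
    rw [one_div_mul_eq_div, le_div_iff₀ (by positivity)] at this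
    linarith
  calc f (x - (1 / L) • w) - fstar
      ≤ f x - fstar - (‖gradient f x‖ ^ 2 - ‖w - gradient f x‖ ^ 2) / (2 * L) := by linarith
    _ ≤ f x - fstar - (2 * μ * (f x - fstar) - ‖w - gradient f x‖ ^ 2) / (2 * L) := by gcongr
    _ = (1 - μ / L) * (f x - fstar) + ‖w - gradient f x‖ ^ 2 / (2 * L) := by field_simp; ring

end LipschitzGradient

theorem inexact_gd_pl_convergence_general
    {d : ℕ} (f : EuclideanSpace ℝ (Fin d) → ℝ)
    (L μ Δ fstar : ℝ) (hL : 0 < L) (hμ : 0 < μ)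
    (hdiff : Differentiable ℝ f)
    (hsmooth : ∀ x y, ‖gradient f x - gradient f y‖ ≤ L * ‖x - y‖)
    (hlb : ∀ x, fstar ≤ f x)
    (hPL : ∀ x, f x - fstar ≤ 1 / (2 * μ) * ‖gradient f x‖ ^ 2)
    (x g : ℕ → EuclideanSpace ℝ (Fin d))
    (hiter : ∀ k, x (k + 1) = x k - (1 / L) • g k)
    (herr : ∀ k, ‖g k - gradient f (x k)‖ ≤ Δ) :
    ∀ k, f (x k) - fstar ≤ (1 - μ / L) ^ k * (f (x 0) - fstar) + Δ ^ 2 / (2 * μ) := by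
  intro k
  rcases le_or_gt μ L with hμL | hLμ
  · refine le_pow_mul_add_of_le_mul_add (a := fun k => f (x k) - fstar)
      (sub_nonneg.2 ((div_le_one hL).2 hμL)) (by positivity) (fun k => ?_) k
    have herr_sq : ‖g k - gradient f (x k)‖ ^ 2 ≤ Δ ^ 2 :=
      pow_le_pow_left₀ (norm_nonneg _) (herr k) 2
    calc f (x (k + 1)) - fstar
        ≤ (1 - μ / L) * (f (x k) - fstar) + ‖g k - gradient f (x k)‖ ^ 2 / (2 * L) := by
          rw [hiter k]; exact sub_le_of_gradient_step_of_PL hL hμ hdiff hsmooth hPL (x k) (g k)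
      _ ≤ (1 - μ / L) * (f (x k) - fstar) + Δ ^ 2 / (2 * L) := by gcongr
      _ = (1 - μ / L) * (f (x k) - fstar) + (1 - (1 - μ / L)) * (Δ ^ 2 / (2 * μ)) := by
          field_simp; ring
  · have hconst := eq_of_lt_PL_const hL hdiff hsmooth hlb hPL hLμ
    rw [hconst, hconst, sub_self, mul_zero, zero_add]
    positivity

/-- Inexact gradient descent under the PL-condition: if `f` is `L`-smooth, satisfies the
PL-condition with constant `μ > 0` and minimum value `fstar`, and
`x (k+1) = x k - (1/L) • g k` with `‖g k - ∇f (x k)‖ ≤ Δ`, then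
`f (x k) - fstar ≤ (1 - μ/L)^k (f (x 0) - fstar) + Δ²/(2μ)`. -/
theorem inexact_gd_pl_convergence
    {d : ℕ} (f : EuclideanSpace ℝ (Fin d) → ℝ)
    (L μ Δ fstar : ℝ) (hL : 0 < L) (hμ : 0 < μ) (hΔ : 0 ≤ Δ)
    (hdiff : Differentiable ℝ f)
    (hsmooth : ∀ x y, ‖gradient f x - gradient f y‖ ≤ L * ‖x - y‖)
    (hlb : ∀ x, fstar ≤ f x)
    (hPL : ∀ x, f x - fstar ≤ 1 / (2 * μ) * ‖gradient f x‖ ^ 2)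
    (x g : ℕ → EuclideanSpace ℝ (Fin d))
    (hiter : ∀ k, x (k + 1) = x k - (1 / L) • g k)
    (herr : ∀ k, ‖g k - gradient f (x k)‖ ≤ Δ) :
    ∀ k, f (x k) - fstar ≤ (1 - μ / L) ^ k * (f (x 0) - fstar) + Δ ^ 2 / (2 * μ) :=
  inexact_gd_pl_convergence_general f L μ Δ fstar hL hμ hdiff hsmooth hlb hPL x g hiter herr
end

section
/- (Descent lemma with biased stochastic gradient, one-step estimate.) Let f: ℝ^d → ℝ be L-smooth and satisfy the PL-condition with constant μ > 0. Fix γ ∈ (0, 1/L]. Suppose g = ∇f(x) + b + n where ‖b‖ ≤ δ, n is a random vector with E[n] = 0 and E‖n‖² ≤ σ². Then for x⁺ = x − γ g: E[f(x⁺)] − f* ≤ (1 − γμ)(f(x) − f*) + (γ/2)δ² + (γ²L/2)σ². -/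
/-!
Integrating the descent lemma `f y ≤ f x + ⟪∇f x, y - x⟫ + L/2 ‖y - x‖²` at `y = x⁺` gives
`E f(x⁺) ≤ f x - γ ⟪∇f x, v⟫ + Lγ²/2 (‖v‖² + E‖n‖²)` with `v = ∇f x + b`, because the noise is
centred. Since `Lγ ≤ 1`, the deterministic part is at most
`γ (‖v‖²/2 - ⟪∇f x, v⟫) = γ/2 (‖b‖² - ‖∇f x‖²)`, and the PL inequality turns `-‖∇f x‖²` into
`-2μ (f x - f*)`.
-/

open MeasureTheory

section

variable {E : Type*} [NormedAddCommGroup E] [InnerProductSpace ℝ E]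

theorem norm_add_sq_div_two_sub_inner_add (a b : E) :
    ‖a + b‖ ^ 2 / 2 - inner ℝ a (a + b) = (‖b‖ ^ 2 - ‖a‖ ^ 2) / 2 := by
  rw [norm_add_sq_real, inner_add_right, real_inner_self_eq_norm_sq]
  ring

section Smooth

variable [CompleteSpace E] {f : E → ℝ}

theorem hasDerivAt_comp_add_smul {x u : E} {t : ℝ} (hf : DifferentiableAt ℝ f (x + t • u)) :
    HasDerivAt (fun s : ℝ => f (x + s • u)) (inner ℝ (gradient f (x + t • u)) u) t := by
  have hline : HasDerivAt (fun s : ℝ => x + s • u) u t := by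
    simpa using ((hasDerivAt_id t).smul_const u).const_add x
  simpa [InnerProductSpace.toDual_apply_apply, Function.comp_def] using
    hf.hasGradientAt.hasFDerivAt.comp_hasDerivAt t hline

theorem le_add_inner_gradient_add_sq_of_lipschitz_gradient {L : ℝ} (hf : Differentiable ℝ f)
    (hgrad : ∀ x y, ‖gradient f x - gradient f y‖ ≤ L * ‖x - y‖) (x y : E) :
    f y ≤ f x + inner ℝ (gradient f x) (y - x) + L / 2 * ‖y - x‖ ^ 2 := by
  set u := y - x
  -- the gap between `f` and its tangent paraboloid, along the segment from `x` to `y`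
  set φ : ℝ → ℝ := fun t => f (x + t • u) - t * inner ℝ (gradient f x) u - L / 2 * t ^ 2 * ‖u‖ ^ 2
  have hφ' : ∀ t, HasDerivAt φ
      (inner ℝ (gradient f (x + t • u)) u - inner ℝ (gradient f x) u - L * t * ‖u‖ ^ 2) t := by
    intro t
    refine (((hasDerivAt_comp_add_smul (hf _)).sub ((hasDerivAt_id t).mul_const _)).sub
      (((hasDerivAt_pow 2 t).const_mul (L / 2)).mul_const (‖u‖ ^ 2))).congr_deriv ?_
    push_cast
    ring
  have hφ'_nonpos : ∀ t ∈ interior (Set.Icc (0 : ℝ) 1),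
      inner ℝ (gradient f (x + t • u)) u - inner ℝ (gradient f x) u - L * t * ‖u‖ ^ 2 ≤ 0 := by
    intro t ht
    rw [interior_Icc] at ht
    rw [sub_nonpos]
    calc inner ℝ (gradient f (x + t • u)) u - inner ℝ (gradient f x) u
        = inner ℝ (gradient f (x + t • u) - gradient f x) u := (inner_sub_left _ _ _).symm
      _ ≤ ‖gradient f (x + t • u) - gradient f x‖ * ‖u‖ := real_inner_le_norm _ _
      _ ≤ L * ‖x + t • u - x‖ * ‖u‖ := by gcongr; exact hgrad _ _
      _ = L * t * ‖u‖ ^ 2 := by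
        rw [add_sub_cancel_left, norm_smul, Real.norm_of_nonneg ht.1.le]; ring
  have hanti : AntitoneOn φ (Set.Icc 0 1) :=
    antitoneOn_of_hasDerivWithinAt_nonpos (convex_Icc 0 1)
      (fun t _ => (hφ' t).continuousAt.continuousWithinAt)
      (fun t _ => (hφ' t).hasDerivWithinAt) hφ'_nonpos
  have h01 := hanti (by norm_num : (0 : ℝ) ∈ Set.Icc 0 1) (by norm_num) zero_le_one
  simp only [φ, u, zero_smul, add_zero, one_smul, add_sub_cancel] at h01
  linarith

end Smooth

section Expectation

variable {Ω : Type*} [MeasurableSpace Ω] {P : Measure Ω}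

theorem MeasureTheory.Integrable.norm_const_add_sq [IsFiniteMeasure P] {n : Ω → E}
    (hn : Integrable n P) (hn2 : Integrable (fun ω => ‖n ω‖ ^ 2) P) (v : E) :
    Integrable (fun ω => ‖v + n ω‖ ^ 2) P := by
  simp_rw [norm_add_sq_real]
  exact ((integrable_const _).fun_add ((hn.const_inner v).const_mul 2)).fun_add hn2

theorem integral_norm_const_add_sq_of_integral_eq_zero [CompleteSpace E] [IsProbabilityMeasure P]
    {n : Ω → E} (hn : Integrable n P) (hn2 : Integrable (fun ω => ‖n ω‖ ^ 2) P)
    (hmean : ∫ ω, n ω ∂P = 0) (v : E) :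
    ∫ ω, ‖v + n ω‖ ^ 2 ∂P = ‖v‖ ^ 2 + ∫ ω, ‖n ω‖ ^ 2 ∂P := by
  simp_rw [norm_add_sq_real]
  rw [integral_add ((integrable_const _).fun_add ((hn.const_inner v).const_mul 2)) hn2,
    integral_add (integrable_const _) ((hn.const_inner v).const_mul 2), integral_const,
    integral_const_mul, integral_inner hn, hmean]
  simp

theorem integral_comp_sub_smul_le_of_lipschitz_gradient [CompleteSpace E]
    [IsProbabilityMeasure P] {f : E → ℝ} {L : ℝ} (hf : Differentiable ℝ f)
    (hgrad : ∀ x y, ‖gradient f x - gradient f y‖ ≤ L * ‖x - y‖) (x : E) (γ : ℝ) {X : Ω → E}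
    (hX : Integrable X P) (hX2 : Integrable (fun ω => ‖X ω‖ ^ 2) P)
    (hfX : Integrable (fun ω => f (x - γ • X ω)) P) :
    ∫ ω, f (x - γ • X ω) ∂P ≤
      f x - γ * inner ℝ (gradient f x) (∫ ω, X ω ∂P) + L * γ ^ 2 / 2 * ∫ ω, ‖X ω‖ ^ 2 ∂P := by
  have hbound : ∀ ω, f (x - γ • X ω) ≤
      f x - γ * inner ℝ (gradient f x) (X ω) + L * γ ^ 2 / 2 * ‖X ω‖ ^ 2 := by
    intro ω
    have := le_add_inner_gradient_add_sq_of_lipschitz_gradient hf hgrad x (x - γ • X ω)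
    rw [sub_sub_cancel_left, inner_neg_right, real_inner_smul_right, norm_neg, norm_smul,
      mul_pow, Real.norm_eq_abs, sq_abs] at this
    linarith
  have hint_inner := (hX.const_inner (gradient f x)).const_mul γ
  have hint_affine : Integrable (fun ω => f x - γ * inner ℝ (gradient f x) (X ω)) P :=
    (integrable_const _).sub hint_inner
  calc ∫ ω, f (x - γ • X ω) ∂P
      ≤ ∫ ω, f x - γ * inner ℝ (gradient f x) (X ω) + L * γ ^ 2 / 2 * ‖X ω‖ ^ 2 ∂P :=
        integral_mono hfX (hint_affine.fun_add (hX2.const_mul _)) hbound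
    _ = _ := by
      rw [integral_add hint_affine (hX2.const_mul _), integral_sub (integrable_const _) hint_inner,
        integral_const, integral_const_mul, integral_const_mul, integral_inner hX]
      simp

end Expectation

end

theorem one_step_biased_stochastic_descent_general
    {d : ℕ} {Ω : Type*} [MeasurableSpace Ω] (P : Measure Ω) [IsProbabilityMeasure P]
    (f : EuclideanSpace ℝ (Fin d) → ℝ)
    (L μ γ δ σ fstar : ℝ) (hL : 0 < L) (hμ : 0 < μ)
    (hγ : 0 < γ) (hγL : γ ≤ 1 / L)
    (hdiff : Differentiable ℝ f)
    (hsmooth : ∀ x y, ‖gradient f x - gradient f y‖ ≤ L * ‖x - y‖)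
    (hPL : ∀ x, f x - fstar ≤ 1 / (2 * μ) * ‖gradient f x‖ ^ 2)
    (x b : EuclideanSpace ℝ (Fin d))
    (hb : ‖b‖ ≤ δ)
    (noise : Ω → EuclideanSpace ℝ (Fin d))
    (hnoise_int : Integrable noise P)
    (hnoise_mean : ∫ ω, noise ω ∂P = 0)
    (hnoise_var : ∫ ω, ‖noise ω‖ ^ 2 ∂P ≤ σ ^ 2)
    (hnoise_sq_int : Integrable (fun ω => ‖noise ω‖ ^ 2) P)
    (xplus : Ω → EuclideanSpace ℝ (Fin d))
    (hstep : ∀ ω, xplus ω = x - γ • (gradient f x + b + noise ω))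
    (hf_int : Integrable (fun ω => f (xplus ω)) P) :
    (∫ ω, f (xplus ω) ∂P) - fstar ≤
      (1 - γ * μ) * (f x - fstar) + γ / 2 * δ ^ 2 + γ ^ 2 * L / 2 * σ ^ 2 := by
  obtain rfl : xplus = fun ω => x - γ • (gradient f x + b + noise ω) := funext hstep
  set g := gradient f x
  have hmean : ∫ ω, g + b + noise ω ∂P = g + b := by
    rw [integral_add (integrable_const _) hnoise_int, hnoise_mean, integral_const]
    simp
  have hdescent := integral_comp_sub_smul_le_of_lipschitz_gradient hdiff hsmooth x γ
    ((integrable_const (g + b)).fun_add hnoise_int)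
    (hnoise_int.norm_const_add_sq hnoise_sq_int (g + b)) hf_int
  rw [hmean, integral_norm_const_add_sq_of_integral_eq_zero hnoise_int hnoise_sq_int
    hnoise_mean] at hdescent
  have hLγ : L * γ ≤ 1 := by rwa [le_div_iff₀ hL, mul_comm] at hγL
  have hstep_size : L * γ ^ 2 / 2 * ‖g + b‖ ^ 2 ≤ γ / 2 * ‖g + b‖ ^ 2 := by
    gcongr; nlinarith
  have hvar : L * γ ^ 2 / 2 * ∫ ω, ‖noise ω‖ ^ 2 ∂P ≤ γ ^ 2 * L / 2 * σ ^ 2 := by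
    rw [show γ ^ 2 * L / 2 = L * γ ^ 2 / 2 by ring]; gcongr
  have hPLx : 2 * μ * (f x - fstar) ≤ ‖g‖ ^ 2 := by
    have := hPL x
    rwa [one_div_mul_eq_div, le_div_iff₀ (by positivity), mul_comm] at this
  have hbias : ‖b‖ ^ 2 ≤ δ ^ 2 := pow_le_pow_left₀ (norm_nonneg b) hb 2
  linear_combination hdescent + hstep_size + hvar + γ * norm_add_sq_div_two_sub_inner_add g b +
    γ / 2 * sub_le_sub hbias hPLx

/-- One-step estimate with a biased stochastic gradient: `g = ∇f(x) + b + n` with `‖b‖ ≤ δ`,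
`E[n] = 0`, `E‖n‖² ≤ σ²`; then for `x⁺ = x - γ g`:
`E[f x⁺] - f* ≤ (1 - γμ)(f x - f*) + (γ/2)δ² + (γ²L/2)σ²`. -/
theorem one_step_biased_stochastic_descent
    {d : ℕ} {Ω : Type*} [MeasurableSpace Ω] (P : Measure Ω) [IsProbabilityMeasure P]
    (f : EuclideanSpace ℝ (Fin d) → ℝ)
    (L μ γ δ σ fstar : ℝ) (hL : 0 < L) (hμ : 0 < μ)
    (hγ : 0 < γ) (hγL : γ ≤ 1 / L) (hδ : 0 ≤ δ) (hσ : 0 ≤ σ)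
    (hdiff : Differentiable ℝ f)
    (hsmooth : ∀ x y, ‖gradient f x - gradient f y‖ ≤ L * ‖x - y‖)
    (hlb : ∀ x, fstar ≤ f x)
    (hPL : ∀ x, f x - fstar ≤ 1 / (2 * μ) * ‖gradient f x‖ ^ 2)
    (x b : EuclideanSpace ℝ (Fin d))
    (hb : ‖b‖ ≤ δ)
    (noise : Ω → EuclideanSpace ℝ (Fin d))
    (hnoise_int : Integrable noise P)
    (hnoise_mean : ∫ ω, noise ω ∂P = 0)
    (hnoise_var : ∫ ω, ‖noise ω‖ ^ 2 ∂P ≤ σ ^ 2)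
    (hnoise_sq_int : Integrable (fun ω => ‖noise ω‖ ^ 2) P)
    (xplus : Ω → EuclideanSpace ℝ (Fin d))
    (hstep : ∀ ω, xplus ω = x - γ • (gradient f x + b + noise ω))
    (hf_int : Integrable (fun ω => f (xplus ω)) P) :
    (∫ ω, f (xplus ω) ∂P) - fstar ≤
      (1 - γ * μ) * (f x - fstar) + γ / 2 * δ ^ 2 + γ ^ 2 * L / 2 * σ ^ 2 :=
  one_step_biased_stochastic_descent_general P f L μ γ δ σ fstar hL hμ hγ hγL hdiff hsmooth hPL x b
    hb noise hnoise_int hnoise_mean hnoise_var hnoise_sq_int xplus hstep hf_int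
end
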